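/- Two conjunctive queries Q and Q' are bag-set-equivalent if and only if their canonical representations (the queries obtained by deleting all duplicate atoms) are isomorphic. -/

import Mathlib

/-!
A homomorphism of queries `Q → R` is the same as an answer of `Q`, on the canonical database of
`R`, that outputs the frozen head of `R`; so bag-set equivalent queries have the same number of
homomorphisms into every query `R`. By Möbius inversion over sets of variables they then also have
the same number of homomorphisms onto each set of variables of `R`, and taking `R = Q₂` and
`R = Q₁` gives homomorphisms `Q₁ → Q₂` and `Q₂ → Q₁` that are surjective on variables. Counting
variables and then atoms shows that these are bijective on both, i.e. an isomorphism of the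
canonical representations. Conversely, bag-set answers only depend on the head and the set of
atoms, and are invariant under renaming variables bijectively.
-/

/-- A relational schema: a type of relation symbols with arities. -/
structure Schema where
  Rel : Type
  ar : Rel → ℕ

/-- A relational atom over schema `S`; variables are natural numbers. -/
structure Atom (S : Schema) where
  rel : S.Rel
  args : Fin (S.ar rel) → ℕ

/-- A conjunctive query: a head (list of variables) and a body (list of atoms). -/
structure CQ (S : Schema) where
  hd : List ℕ
  body : List (Atom S)

variable {S : Schema} {Dom : Type}

def Atom.rename (f : ℕ → ℕ) (a : Atom S) : Atom S := ⟨a.rel, f ∘ a.args⟩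

def CQ.rename (f : ℕ → ℕ) (Q : CQ S) : CQ S := ⟨Q.hd.map f, Q.body.map (Atom.rename f)⟩

/-- The variables of a query. -/
def CQ.vars (Q : CQ S) : Set ℕ := {x | x ∈ Q.hd ∨ ∃ a ∈ Q.body, ∃ i, a.args i = x}

/-- A bag-valued database: a finite multiset of tuples for each relation symbol. -/
abbrev DB (S : Schema) (Dom : Type) := (r : S.Rel) → Multiset (Fin (S.ar r) → Dom)

/-- A set-valued database: every relation is a set. -/
def IsSetDB (D : DB S Dom) : Prop := ∀ r, (D r).Nodup

/-- An assignment satisfies a list of atoms. -/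
def Sat (D : DB S Dom) (body : List (Atom S)) (γ : ℕ → Dom) : Prop :=
  ∀ a ∈ body, (γ ∘ a.args) ∈ D a.rel

/-- Bag-semantics weight of an assignment: product of multiplicities of matched tuples. -/
noncomputable def weight (D : DB S Dom) (Q : CQ S) (γ : ℕ → Dom) : ℕ :=
  (Q.body.map fun (a : Atom S) =>
    letI : DecidableEq (Fin (S.ar a.rel) → Dom) := Classical.decEq _
    (D a.rel).count (γ ∘ a.args)).prod

/-- Canonical assignments: everything outside the query's variables is a default value. -/
def Canon [Inhabited Dom] (Q : CQ S) (γ : ℕ → Dom) : Prop := ∀ x, x ∉ Q.vars → γ x = default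

/-- Bag semantics: multiplicity of the tuple `t` in `Q(D, B)`. -/
noncomputable def bagMult [Inhabited Dom] (D : DB S Dom) (Q : CQ S) (t : List Dom) : ℕ :=
  ∑ᶠ γ ∈ {γ : ℕ → Dom | Canon Q γ ∧ Q.hd.map γ = t}, weight D Q γ

/-- Bag-set semantics: multiplicity of `t` in `Q(D, BS)`: one per satisfying assignment. -/
noncomputable def bsMult [Inhabited Dom] (D : DB S Dom) (Q : CQ S) (t : List Dom) : ℕ :=
  Nat.card {γ : ℕ → Dom // Canon Q γ ∧ Sat D Q.body γ ∧ Q.hd.map γ = t}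

/-- Set semantics: the set of tuples returned by `Q` on `D`. -/
def setAns (D : DB S Dom) (Q : CQ S) : Set (List Dom) :=
  {t | ∃ γ : ℕ → Dom, Sat D Q.body γ ∧ Q.hd.map γ = t}

/-- Query isomorphism: a bijective variable renaming preserving head and body (as multiset). -/
def CQIso (Q1 Q2 : CQ S) : Prop :=
  ∃ e : ℕ ≃ ℕ, Q1.hd.map ⇑e = Q2.hd ∧
    Multiset.map (Atom.rename ⇑e) (Q1.body : Multiset (Atom S)) = (Q2.body : Multiset (Atom S))

/-- The canonical representation of a body: duplicate atoms removed. -/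
noncomputable def canonicalBody (Q : CQ S) : Multiset (Atom S) :=
  letI : DecidableEq (Atom S) := Classical.decEq _
  (Q.body : Multiset (Atom S)).dedup

open scoped Classical

namespace Atom

lemma rename_injective {f : ℕ → ℕ} (hf : Function.Injective f) :
    Function.Injective (Atom.rename (S := S) f) := by
  rintro ⟨r, u⟩ ⟨r', u'⟩ h
  obtain ⟨rfl, h⟩ := Atom.mk.inj h
  exact congrArg (Atom.mk r) (hf.comp_left (eq_of_heq h))

end Atom

namespace CQ

variable {Q R : CQ S}

lemma mem_vars_of_mem_hd {x : ℕ} (hx : x ∈ Q.hd) : x ∈ Q.vars := Or.inl hx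

lemma args_mem_vars {a : Atom S} (ha : a ∈ Q.body) (i : Fin (S.ar a.rel)) : a.args i ∈ Q.vars :=
  Or.inr ⟨a, ha, i, rfl⟩

lemma atom_rename_congr {f g : ℕ → ℕ} (hfg : Set.EqOn f g Q.vars) {a : Atom S} (ha : a ∈ Q.body) :
    a.rename f = a.rename g := by
  simp only [Atom.rename, Atom.mk.injEq, heq_eq_eq, true_and]
  exact funext fun i => hfg (args_mem_vars ha i)

lemma atom_rename_injOn {f : ℕ → ℕ} (hf : Set.InjOn f Q.vars) :
    Set.InjOn (Atom.rename f) {a | a ∈ Q.body} := by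
  rintro ⟨r, u⟩ ha ⟨r', u'⟩ ha' h
  obtain ⟨rfl, h⟩ := Atom.mk.inj h
  congr 1
  exact funext fun i => hf (args_mem_vars ha i) (args_mem_vars ha' i) (congrFun (eq_of_heq h) i)

lemma finite_vars (Q : CQ S) : Q.vars.Finite := by
  refine ((List.finite_toSet Q.hd).union ((List.finite_toSet Q.body).biUnion
    fun a _ => Set.finite_range a.args)).subset ?_
  rintro x (hx | ⟨a, ha, i, rfl⟩)
  · exact Or.inl hx
  · exact Or.inr (Set.mem_biUnion ha ⟨i, rfl⟩)

noncomputable def varsFinset (Q : CQ S) : Finset ℕ := Q.finite_vars.toFinset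

@[simp] lemma mem_varsFinset {x : ℕ} : x ∈ Q.varsFinset ↔ x ∈ Q.vars :=
  Q.finite_vars.mem_toFinset

@[simp] lemma coe_varsFinset (Q : CQ S) : (Q.varsFinset : Set ℕ) = Q.vars :=
  Q.finite_vars.coe_toFinset

lemma sat_congr {D : DB S Dom} {γ γ' : ℕ → Dom} (hγ : Set.EqOn γ γ' Q.vars) :
    Sat D Q.body γ ↔ Sat D Q.body γ' := by
  refine forall₂_congr fun a ha => ?_
  rw [show γ ∘ a.args = γ' ∘ a.args from funext fun i => hγ (args_mem_vars ha i)]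

lemma vars_rename (e : ℕ ≃ ℕ) (Q : CQ S) : (Q.rename e).vars = e '' Q.vars := by
  ext x
  simp only [CQ.vars, CQ.rename, List.mem_map, Set.mem_image, Set.mem_ofPred_eq]
  constructor
  · rintro (⟨y, hy, rfl⟩ | ⟨_, ⟨a, ha, rfl⟩, i, rfl⟩)
    · exact ⟨y, Or.inl hy, rfl⟩
    · exact ⟨a.args i, Or.inr ⟨a, ha, i, rfl⟩, rfl⟩
  · rintro ⟨y, hy | ⟨a, ha, i, rfl⟩, rfl⟩
    · exact Or.inl ⟨y, hy, rfl⟩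
    · exact Or.inr ⟨a.rename e, ⟨a, ha, rfl⟩, i, rfl⟩

end CQ

lemma mem_canonicalBody {Q : CQ S} {a : Atom S} : a ∈ canonicalBody Q ↔ a ∈ Q.body := by
  simp [canonicalBody]

lemma nodup_canonicalBody (Q : CQ S) : (canonicalBody Q).Nodup := Multiset.nodup_dedup _

lemma canonicalBody_map_rename_eq_iff {Q₁ Q₂ : CQ S} {e : ℕ ≃ ℕ} :
    (canonicalBody Q₁).map (Atom.rename e) = canonicalBody Q₂ ↔
      ∀ a, a ∈ (Q₁.rename e).body ↔ a ∈ Q₂.body := by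
  have hmem (a : Atom S) :
      a ∈ (canonicalBody Q₁).map (Atom.rename e) ↔ a ∈ (Q₁.rename e).body := by
    simp only [Multiset.mem_map, mem_canonicalBody, CQ.rename, List.mem_map]
  refine ⟨fun h a => by rw [← hmem, h, mem_canonicalBody], fun h => ?_⟩
  refine (Multiset.Nodup.ext ((nodup_canonicalBody Q₁).map (Atom.rename_injective e.injective))
    (nodup_canonicalBody Q₂)).mpr fun a => ?_
  rw [hmem, h, mem_canonicalBody]

lemma bsMult_rename [Inhabited Dom] (D : DB S Dom) (e : ℕ ≃ ℕ) (Q : CQ S) (t : List Dom) :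
    bsMult D (Q.rename e) t = bsMult D Q t := by
  refine Nat.card_congr ((Equiv.arrowCongr e (Equiv.refl Dom)).symm.subtypeEquiv fun γ => ?_)
  have hcanon : Canon (Q.rename e) γ ↔ Canon Q (γ ∘ e) := by
    rw [Canon, CQ.vars_rename]
    refine ⟨fun h y hy => h (e y) (e.injective.mem_set_image.not.mpr hy), fun h x hx => ?_⟩
    rw [← e.apply_symm_apply x]
    exact h _ fun hy => hx ⟨_, hy, e.apply_symm_apply x⟩
  have hsat : Sat D (Q.rename e).body γ ↔ Sat D Q.body (γ ∘ e) := by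
    simp only [Sat, CQ.rename, List.forall_mem_map]
    rfl
  change _ ↔ Canon Q (γ ∘ e) ∧ Sat D Q.body (γ ∘ e) ∧ Q.hd.map (γ ∘ e) = t
  rw [← hcanon, ← hsat, ← List.map_map]
  rfl

lemma bsMult_congr [Inhabited Dom] {D : DB S Dom} {Q Q' : CQ S} (hhd : Q.hd = Q'.hd)
    (hbody : ∀ a, a ∈ Q.body ↔ a ∈ Q'.body) (t : List Dom) : bsMult D Q t = bsMult D Q' t := by
  have hvars : Q.vars = Q'.vars := by simp only [CQ.vars, hhd, hbody]
  have hsat (γ : ℕ → Dom) : Sat D Q.body γ ↔ Sat D Q'.body γ := by simp only [Sat, hbody]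
  simp only [bsMult, Canon, hvars, hsat, hhd]

namespace CQ

variable {Q R : CQ S}

def restrict (R : CQ S) (W : Finset ℕ) : CQ S :=
  ⟨R.hd, R.body.filter fun a => ∀ i, a.args i ∈ W⟩

lemma mem_restrict_body {W : Finset ℕ} {a : Atom S} :
    a ∈ (R.restrict W).body ↔ a ∈ R.body ∧ ∀ i, a.args i ∈ W := by
  simp [restrict]

/-- Query homomorphisms, normalised to `0` off the variables of the source (as `Canon` normalises
assignments), so that there are only finitely many. -/
structure IsHom (Q R : CQ S) (h : ℕ → ℕ) : Prop where
  eq_zero : ∀ x ∉ Q.vars, h x = 0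
  rename_mem : ∀ a ∈ Q.body, a.rename h ∈ R.body
  map_hd : Q.hd.map h = R.hd

lemma IsHom.mapsTo {h : ℕ → ℕ} (hh : IsHom Q R h) : Set.MapsTo h Q.vars R.vars := by
  rintro x (hx | ⟨a, ha, i, rfl⟩)
  · exact mem_vars_of_mem_hd (hh.map_hd ▸ List.mem_map_of_mem hx)
  · exact args_mem_vars (hh.rename_mem a ha) i

lemma eqOn_normalize_id (Q : CQ S) :
    Set.EqOn (fun x => if x ∈ Q.vars then x else 0) id Q.vars := fun _ hx => if_pos hx

lemma isHom_normalize_id (Q : CQ S) : IsHom Q Q fun x => if x ∈ Q.vars then x else 0 := by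
  refine ⟨fun x hx => if_neg hx, fun a ha => ?_, ?_⟩
  · rwa [atom_rename_congr Q.eqOn_normalize_id ha, Atom.rename, Function.id_comp]
  · rw [List.map_congr_left fun x hx => Q.eqOn_normalize_id (mem_vars_of_mem_hd hx), List.map_id]

lemma finite_setOf_isHom (Q R : CQ S) : {h | IsHom Q R h}.Finite := by
  have := Q.finite_vars.to_subtype
  refine Set.Finite.of_finite_image (f := fun h (x : Q.vars) => h x) ?_ ?_
  · refine (Set.Finite.pi (t := fun _ => R.vars) fun _ => R.finite_vars).subset ?_
    rintro _ ⟨h, hh, rfl⟩ x -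
    exact hh.mapsTo x.2
  · intro h hh h' hh' hrestr
    funext x
    by_cases hx : x ∈ Q.vars
    · exact congrFun hrestr ⟨x, hx⟩
    · rw [hh.eq_zero x hx, hh'.eq_zero x hx]

noncomputable def homs (Q R : CQ S) : Finset (ℕ → ℕ) := (finite_setOf_isHom Q R).toFinset

@[simp] lemma mem_homs {h : ℕ → ℕ} : h ∈ Q.homs R ↔ IsHom Q R h :=
  Set.Finite.mem_toFinset _

noncomputable def homsOnto (Q R : CQ S) (W : Finset ℕ) : Finset (ℕ → ℕ) :=
  (Q.homs R).filter fun h => Q.varsFinset.image h = W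

lemma mem_homsOnto {W : Finset ℕ} {h : ℕ → ℕ} :
    h ∈ Q.homsOnto R W ↔ IsHom Q R h ∧ Q.varsFinset.image h = W := by
  simp [homsOnto]

lemma isHom_restrict_iff {W : Finset ℕ} {h : ℕ → ℕ} (hW : Q.varsFinset.image h ⊆ W) :
    IsHom Q (R.restrict W) h ↔ IsHom Q R h := by
  have hargs {a : Atom S} (ha : a ∈ Q.body) (i) : (a.rename h).args i ∈ W :=
    hW (Finset.mem_image_of_mem h (mem_varsFinset.mpr (args_mem_vars ha i)))
  exact ⟨fun hh => ⟨hh.eq_zero, fun a ha => (mem_restrict_body.mp (hh.rename_mem a ha)).1,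
      hh.map_hd⟩,
    fun hh => ⟨hh.eq_zero, fun a ha => mem_restrict_body.mpr ⟨hh.rename_mem a ha, hargs ha⟩,
      hh.map_hd⟩⟩

lemma IsHom.image_subset_of_restrict {W : Finset ℕ} {h : ℕ → ℕ}
    (hh : IsHom Q (R.restrict W) h) (hW : ∀ x ∈ R.hd, x ∈ W) : Q.varsFinset.image h ⊆ W := by
  intro y hy
  obtain ⟨x, hx, rfl⟩ := Finset.mem_image.mp hy
  rcases mem_varsFinset.mp hx with hx | ⟨a, ha, i, rfl⟩
  · exact hW _ (hh.map_hd ▸ List.mem_map_of_mem hx)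
  · exact (mem_restrict_body.mp (hh.rename_mem a ha)).2 i

lemma card_homs_restrict {W : Finset ℕ} (hW : ∀ x ∈ R.hd, x ∈ W) :
    (Q.homs (R.restrict W)).card = ∑ W' ∈ W.powerset, (Q.homsOnto R W').card := by
  rw [Finset.card_eq_sum_card_fiberwise fun h hh =>
    Finset.mem_powerset.mpr ((mem_homs.mp hh).image_subset_of_restrict hW)]
  refine Finset.sum_congr rfl fun W' hW' => congrArg Finset.card (Finset.ext fun h => ?_)
  rw [Finset.mem_filter, mem_homs, mem_homsOnto]
  exact ⟨fun ⟨hh, him⟩ => ⟨(isHom_restrict_iff (him ▸ Finset.mem_powerset.mp hW')).mp hh, him⟩,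
    fun ⟨hh, him⟩ => ⟨(isHom_restrict_iff (him ▸ Finset.mem_powerset.mp hW')).mpr hh, him⟩⟩

lemma homsOnto_eq_empty {W : Finset ℕ} (hW : ¬ ∀ x ∈ R.hd, x ∈ W) : Q.homsOnto R W = ∅ := by
  refine Finset.eq_empty_of_forall_notMem fun h hh => hW fun y hy => ?_
  obtain ⟨hhom, rfl⟩ := mem_homsOnto.mp hh
  obtain ⟨x, hx, rfl⟩ := List.mem_map.mp (hhom.map_hd ▸ hy)
  exact Finset.mem_image_of_mem h (mem_varsFinset.mpr (mem_vars_of_mem_hd hx))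

/-- Möbius inversion over the lattice of finite sets of variables. -/
lemma card_homsOnto_eq_of_card_homs_eq {Q₁ Q₂ : CQ S}
    (hQ : ∀ R : CQ S, (Q₁.homs R).card = (Q₂.homs R).card) (R : CQ S) (W : Finset ℕ) :
    (Q₁.homsOnto R W).card = (Q₂.homsOnto R W).card := by
  induction W using Finset.strongInduction with
  | H W ih =>
  by_cases hW : ∀ x ∈ R.hd, x ∈ W
  · have h₁ := card_homs_restrict (Q := Q₁) hW
    have h₂ := card_homs_restrict (Q := Q₂) hW
    rw [← Finset.sum_erase_add _ _ (Finset.mem_powerset_self W)] at h₁ h₂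
    have hsmaller : ∑ W' ∈ W.powerset.erase W, (Q₁.homsOnto R W').card =
        ∑ W' ∈ W.powerset.erase W, (Q₂.homsOnto R W').card := by
      refine Finset.sum_congr rfl fun W' hW' => ih W' ?_
      obtain ⟨hne, hsub⟩ := Finset.mem_erase.mp hW'
      exact Finset.ssubset_iff_subset_ne.mpr ⟨Finset.mem_powerset.mp hsub, hne⟩
    have := hQ (R.restrict W)
    omega
  · rw [homsOnto_eq_empty hW, homsOnto_eq_empty hW]

lemma homsOnto_self_nonempty (Q : CQ S) : (Q.homsOnto Q Q.varsFinset).Nonempty := by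
  refine ⟨_, mem_homsOnto.mpr ⟨Q.isHom_normalize_id, ?_⟩⟩
  rw [Finset.image_congr fun x hx => Q.eqOn_normalize_id (mem_varsFinset.mp hx), Finset.image_id]

lemma image_rename_body_eq {f g : ℕ → ℕ} (hf : IsHom Q R f) (hg : IsHom R Q g)
    (hfi : Set.InjOn f Q.vars) (hgi : Set.InjOn g R.vars) :
    Q.body.toFinset.image (Atom.rename f) = R.body.toFinset := by
  have hsub {Q R : CQ S} {f : ℕ → ℕ} (hf : IsHom Q R f) :
      Q.body.toFinset.image (Atom.rename f) ⊆ R.body.toFinset := by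
    intro b hb
    obtain ⟨a, ha, rfl⟩ := Finset.mem_image.mp hb
    exact List.mem_toFinset.mpr (hf.rename_mem a (List.mem_toFinset.mp ha))
  have hcard {Q : CQ S} {f : ℕ → ℕ} (hfi : Set.InjOn f Q.vars) :
      (Q.body.toFinset.image (Atom.rename f)).card = Q.body.toFinset.card :=
    Finset.card_image_of_injOn fun a ha b hb =>
      atom_rename_injOn hfi (List.mem_toFinset.mp ha) (List.mem_toFinset.mp hb)
  refine Finset.eq_of_subset_of_card_le (hsub hf) ?_
  rw [hcard hfi, ← hcard hgi]
  exact Finset.card_le_card (hsub hg)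

lemma exists_perm_eqOn {f : ℕ → ℕ} (hf : Set.InjOn f Q.vars) :
    ∃ e : ℕ ≃ ℕ, Set.EqOn e f Q.vars := by
  have := Q.finite_vars.to_subtype
  obtain ⟨e, he⟩ := Equiv.Perm.exists_extending_pair (Subtype.val : Q.vars → ℕ)
    (f ∘ Subtype.val) Subtype.val_injective hf.injective
  exact ⟨e, fun x hx => he ⟨x, hx⟩⟩

lemma exists_rename_eq_of_homsOnto {Q₁ Q₂ : CQ S} {f g : ℕ → ℕ}
    (hf : f ∈ Q₁.homsOnto Q₂ Q₂.varsFinset) (hg : g ∈ Q₂.homsOnto Q₁ Q₁.varsFinset) :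
    ∃ e : ℕ ≃ ℕ, (Q₁.rename e).hd = Q₂.hd ∧ ∀ a, a ∈ (Q₁.rename e).body ↔ a ∈ Q₂.body := by
  obtain ⟨hf, hfim⟩ := mem_homsOnto.mp hf
  obtain ⟨hg, hgim⟩ := mem_homsOnto.mp hg
  have hcard : Q₁.varsFinset.card = Q₂.varsFinset.card :=
    le_antisymm (hgim ▸ Finset.card_image_le) (hfim ▸ Finset.card_image_le)
  have hfi : Set.InjOn f Q₁.vars :=
    Q₁.coe_varsFinset ▸ Finset.injOn_of_card_image_eq (hfim ▸ hcard.symm)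
  have hgi : Set.InjOn g Q₂.vars :=
    Q₂.coe_varsFinset ▸ Finset.injOn_of_card_image_eq (hgim ▸ hcard)
  obtain ⟨e, he⟩ := exists_perm_eqOn hfi
  have hbody := image_rename_body_eq hf hg hfi hgi
  refine ⟨e, ?_, fun a => ?_⟩
  · rw [CQ.rename, List.map_congr_left fun x hx => he (mem_vars_of_mem_hd hx)]
    exact hf.map_hd
  · rw [← List.mem_toFinset (l := Q₂.body), ← hbody, Finset.mem_image]
    simp only [CQ.rename, List.mem_map, List.mem_toFinset]
    exact exists_congr fun b => and_congr_right fun hb => by rw [atom_rename_congr he hb]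

section CanonicalDB

variable (ι : ℕ ↪ Dom) (R : CQ S)

lemma finite_frozenTuples (r : S.Rel) :
    {t | ∃ v, (⟨r, v⟩ : Atom S) ∈ R.body ∧ ι ∘ v = t}.Finite := by
  have hinj : Function.Injective (Atom.mk (S := S) r) := fun _ _ h => (Atom.mk.inj h).2.eq
  refine (((List.finite_toSet R.body).preimage hinj.injOn).image (ι ∘ ·)).subset ?_
  rintro _ ⟨v, hv, rfl⟩
  exact ⟨v, hv, rfl⟩

/-- The canonical database of `R`: its atoms, with the variables frozen to constants by `ι`. -/
noncomputable def canonicalDB : DB S Dom := fun r => (R.finite_frozenTuples ι r).toFinset.val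

lemma isSetDB_canonicalDB : IsSetDB (R.canonicalDB ι) := fun _ => Finset.nodup _

variable {ι R}

lemma mem_canonicalDB {r : S.Rel} {t : Fin (S.ar r) → Dom} :
    t ∈ R.canonicalDB ι r ↔ ∃ v, (⟨r, v⟩ : Atom S) ∈ R.body ∧ ι ∘ v = t := by
  simp [canonicalDB]

lemma comp_mem_canonicalDB_iff {r : S.Rel} {v : Fin (S.ar r) → ℕ} :
    ι ∘ v ∈ R.canonicalDB ι r ↔ (⟨r, v⟩ : Atom S) ∈ R.body := by
  rw [mem_canonicalDB]
  exact ⟨fun ⟨w, hw, hwv⟩ => ι.injective.comp_left hwv ▸ hw, fun hv => ⟨v, hv, rfl⟩⟩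

lemma sat_canonicalDB_iff {Q : CQ S} {h : ℕ → ℕ} :
    Sat (R.canonicalDB ι) Q.body (ι ∘ h) ↔ ∀ a ∈ Q.body, a.rename h ∈ R.body :=
  forall₂_congr fun _ _ => comp_mem_canonicalDB_iff

variable [Inhabited Dom]

lemma answer_canonicalDB_iff {Q : CQ S} {γ : ℕ → Dom} :
    (Canon Q γ ∧ Sat (R.canonicalDB ι) Q.body γ ∧ Q.hd.map γ = R.hd.map ι) ↔
      ∃ h, IsHom Q R h ∧ (fun x => if x ∈ Q.vars then ι (h x) else default) = γ := by
  constructor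
  · rintro ⟨hcanon, hsat, hhd⟩
    have hrange : ∀ x ∈ Q.vars, γ x ∈ Set.range ι := by
      rintro x (hx | ⟨a, ha, i, rfl⟩)
      · obtain ⟨y, -, hy⟩ := List.mem_map.mp (hhd ▸ List.mem_map_of_mem hx)
        exact ⟨y, hy⟩
      · obtain ⟨v, -, hv⟩ := mem_canonicalDB.mp (hsat a ha)
        exact ⟨v i, congrFun hv i⟩
    set h := fun x => if x ∈ Q.vars then Function.invFun ι (γ x) else 0
    have hγ : Set.EqOn (ι ∘ h) γ Q.vars := fun x hx => by
      simp only [Function.comp_apply, h, if_pos hx]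
      exact Function.invFun_eq (hrange x hx)
    refine ⟨h, ⟨fun x hx => if_neg hx, sat_canonicalDB_iff.mp ((sat_congr hγ).mpr hsat), ?_⟩, ?_⟩
    · apply List.map_injective_iff.mpr ι.injective
      rw [List.map_map, ← hhd]
      exact List.map_congr_left fun x hx => hγ (mem_vars_of_mem_hd hx)
    · funext x
      by_cases hx : x ∈ Q.vars
      · simpa [if_pos hx] using hγ hx
      · rw [if_neg hx, hcanon x hx]
  · rintro ⟨h, hh, rfl⟩
    have hγ : Set.EqOn (fun x => if x ∈ Q.vars then ι (h x) else default) (ι ∘ h) Q.vars :=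
      fun x hx => if_pos hx
    refine ⟨fun x hx => if_neg hx, (sat_congr hγ).mpr (sat_canonicalDB_iff.mpr hh.rename_mem), ?_⟩
    rw [← hh.map_hd, List.map_map]
    exact List.map_congr_left fun x hx => hγ (mem_vars_of_mem_hd hx)

lemma bsMult_canonicalDB (Q : CQ S) :
    bsMult (R.canonicalDB ι) Q (R.hd.map ι) = (Q.homs R).card := by
  have hinj :
      Set.InjOn (fun h x => if x ∈ Q.vars then ι (h x) else default) {h | IsHom Q R h} := by
    intro h hh h' hh' heq
    funext x
    by_cases hx : x ∈ Q.vars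
    · exact ι.injective (by simpa [if_pos hx] using congrFun heq x)
    · rw [hh.eq_zero x hx, hh'.eq_zero x hx]
  rw [bsMult, ← Set.ncard_coe_finset, homs, Set.Finite.coe_toFinset, ← hinj.ncard_image]
  exact congrArg Set.ncard (Set.ext fun γ => answer_canonicalDB_iff)

end CanonicalDB

end CQ

theorem bag_set_equiv_iff_canonical_isomorphic {S : Schema}
    (Dom : Type) [Inhabited Dom] [Infinite Dom] (Q1 Q2 : CQ S) :
    (∀ D : DB S Dom, IsSetDB D → ∀ t : List Dom, bsMult D Q1 t = bsMult D Q2 t) ↔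
      (∃ e : ℕ ≃ ℕ, Q1.hd.map ⇑e = Q2.hd ∧
        (canonicalBody Q1).map (Atom.rename ⇑e) = canonicalBody Q2) := by
  constructor
  · intro hequiv
    let ι := Infinite.natEmbedding Dom
    have hhoms (R : CQ S) : (Q1.homs R).card = (Q2.homs R).card := by
      rw [← CQ.bsMult_canonicalDB (ι := ι) (R := R) Q1,
        ← CQ.bsMult_canonicalDB (ι := ι) (R := R) Q2]
      exact hequiv _ (R.isSetDB_canonicalDB ι) _
    obtain ⟨f, hf⟩ : (Q1.homsOnto Q2 Q2.varsFinset).Nonempty := by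
      rw [← Finset.card_pos, CQ.card_homsOnto_eq_of_card_homs_eq hhoms]
      exact Q2.homsOnto_self_nonempty.card_pos
    obtain ⟨g, hg⟩ : (Q2.homsOnto Q1 Q1.varsFinset).Nonempty := by
      rw [← Finset.card_pos, ← CQ.card_homsOnto_eq_of_card_homs_eq hhoms]
      exact Q1.homsOnto_self_nonempty.card_pos
    obtain ⟨e, hhd, hbody⟩ := CQ.exists_rename_eq_of_homsOnto hf hg
    exact ⟨e, hhd, canonicalBody_map_rename_eq_iff.mpr hbody⟩
  · rintro ⟨e, hhd, hbody⟩ D - t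
    rw [← bsMult_rename D e Q1 t]
    exact bsMult_congr hhd (canonicalBody_map_rename_eq_iff.mp hbody) t
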